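/- Let S_λ be a weighted shift on a directed tree 𝒯 = (V, E) with weights λ = {λ_v}_{v ∈ V°}, and let u, w ∈ V be such that Chi(u) = {w} and λ_w ≠ 0. Suppose u is a Stieltjes vertex with respect to S_λ. If the Stieltjes moment sequence {‖S_λⁿ e_w‖²}_{n=0}^∞ is determinate, then both {‖S_λⁿ e_u‖²}_{n=0}^∞ and {‖S_λ^{n+1} e_u‖²}_{n=0}^∞ are determinate Stieltjes moment sequences. -/

import Mathlib

open MeasureTheory ENNReal Set
open scoped Classical

noncomputable section

universe u

/-! ### Stieltjes moment sequences -/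

/-- `μ` is a representing measure of the sequence `t`, i.e. a positive Borel measure on `[0,∞)`
(modelled as a Borel measure on `ℝ` vanishing on `(-∞,0)`) such that `∫_0^∞ sⁿ dμ(s) = t n`
for all `n`. -/
def IsRepMeasure (μ : Measure ℝ) (t : ℕ → ℝ) : Prop :=
  μ (Set.Iio 0) = 0 ∧ ∀ n : ℕ, ∫⁻ s, ENNReal.ofReal s ^ n ∂μ = ENNReal.ofReal (t n)

/-- `t` is a Stieltjes moment sequence. -/
def IsStieltjesMomentSeq (t : ℕ → ℝ) : Prop :=
  (∀ n, 0 ≤ t n) ∧ ∃ μ : Measure ℝ, IsRepMeasure μ t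

/-- `t` is a determinate Stieltjes moment sequence: it has exactly one representing measure. -/
def IsDeterminateStieltjes (t : ℕ → ℝ) : Prop :=
  (∀ n, 0 ≤ t n) ∧ ∃! μ : Measure ℝ, IsRepMeasure μ t

/-- a Borel probability measure on `[0,∞)` -/
def IsProbOnRplus (μ : Measure ℝ) : Prop := IsProbabilityMeasure μ ∧ μ (Set.Iio 0) = 0

/-! ### Unbounded operators -/

section Op

variable {H : Type*} [NormedAddCommGroup H] [InnerProductSpace ℂ H]

/-- Apply a partially defined operator, with junk value `0` outside of the domain. -/
def pApply (S : H →ₗ.[ℂ] H) (x : H) : H := if h : x ∈ S.domain then S ⟨x, h⟩ else 0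

/-- `x ∈ D^∞(S)`. -/
def MemDomInf (S : H →ₗ.[ℂ] H) (x : H) : Prop := ∀ n : ℕ, (pApply S)^[n] x ∈ S.domain

/-- The graph of the composition `A ∘ B` of two partially defined operators. -/
def graphComp (A B : H →ₗ.[ℂ] H) : Set (H × H) :=
  {p | ∃ y, (p.1, y) ∈ B.graph ∧ (y, p.2) ∈ A.graph}

/-- A normal (unbounded) operator: closed, densely defined, and `N* N = N N*`
(as an equality of the graphs of the compositions). -/
def IsNormalOp {K : Type*} [NormedAddCommGroup K] [InnerProductSpace ℂ K] [CompleteSpace K]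
    (N : K →ₗ.[ℂ] K) : Prop :=
  Dense (N.domain : Set K) ∧ N.IsClosed ∧
    graphComp N.adjoint N = graphComp N N.adjoint

/-- A densely defined operator `S` in a complex Hilbert space `H` is subnormal if there are a
complex Hilbert space `K`, an isometric embedding `J : H → K` and a normal operator `N` in `K`
extending `J ∘ S ∘ J⁻¹`. -/
def Subnormal {H : Type u} [NormedAddCommGroup H] [InnerProductSpace ℂ H]
    (S : H →ₗ.[ℂ] H) : Prop :=
  Dense (S.domain : Set H) ∧
    ∃ (K : Type u) (_ : NormedAddCommGroup K) (_ : InnerProductSpace ℂ K) (_ : CompleteSpace K)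
      (J : H →ₗᵢ[ℂ] K) (N : K →ₗ.[ℂ] K), IsNormalOp N ∧
        ∀ x : S.domain, ∃ hx : J x ∈ N.domain, N ⟨J x, hx⟩ = J (S x)

/-- `F` is a core of the operator `S`. -/
def IsCore (S : H →ₗ.[ℂ] H) (F : Submodule ℂ H) : Prop :=
  (F : Set H) ⊆ (S.domain : Set H) ∧
    (S.graph : Set (H × H)) ⊆ closure {p : H × H | p.1 ∈ F ∧ p.2 = pApply S p.1}

end Op

/-! ### ℓ²-spaces and weighted shifts -/

instance : Fact ((1 : ℝ≥0∞) ≤ 2) := ⟨one_le_two⟩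

/-- `ℓ²(V)`. -/
abbrev L2 (V : Type*) := lp (fun _ : V => ℂ) 2

section Shift

variable {V : Type*}

/-- the standard basis vector `e_u`, as a function on `V` -/
def eV (u : V) : V → ℂ := fun v => if v = u then 1 else 0

/-- The formal weighted-shift action determined by a partial "parent" function `p` and a weight
function `w` : `(Λ f)(v) = w v * f (parent of v)` if `v` has a parent, and `0` otherwise. -/
def lamOf (p : V → Option V) (w : V → ℂ) : (V → ℂ) →ₗ[ℂ] (V → ℂ) where
  toFun f v := ((p v).map fun u => w v * f u).getD 0
  map_add' f g := by funext v; cases h : p v <;> simp [h, mul_add]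
  map_smul' c f := by funext v; cases h : p v <;> simp [h]; ring

/-- `‖S^n e_u‖²` for the weighted shift with formal action `L`. -/
def momSeqL (L : (V → ℂ) →ₗ[ℂ] (V → ℂ)) (u : V) (n : ℕ) : ℝ :=
  ∑' v, ‖(⇑L)^[n] (eV u) v‖ ^ 2

/-- `e_u ∈ D^∞(S)` for the weighted shift with formal action `L`. -/
def eMemDomInf (L : (V → ℂ) →ₗ[ℂ] (V → ℂ)) (u : V) : Prop :=
  ∀ n : ℕ, Memℓp ((⇑L)^[n] (eV u)) 2

/-- The (in general unbounded) operator in `ℓ²(V)` associated with the formal action `L`,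
with its natural domain `{f ∈ ℓ²(V) : L f ∈ ℓ²(V)}`. -/
def pmOf (L : (V → ℂ) →ₗ[ℂ] (V → ℂ)) : L2 V →ₗ.[ℂ] L2 V where
  domain :=
    { carrier := {f : L2 V | Memℓp (L ⇑f) 2}
      add_mem' := by
        intro f g hf hg
        have h2 : L ⇑(f + g) = L ⇑f + L ⇑g := by
          rw [lp.coeFn_add, map_add]
        simpa only [Set.mem_setOf_eq, h2] using hf.add hg
      zero_mem' := by
        have h2 : L ⇑(0 : L2 V) = 0 := by rw [lp.coeFn_zero, map_zero]
        simp only [Set.mem_setOf_eq, h2]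
        exact zero_memℓp
      smul_mem' := by
        intro c f hf
        have h2 : L ⇑(c • f) = c • L ⇑f := by
          rw [lp.coeFn_smul, _root_.map_smul]
        simpa only [Set.mem_setOf_eq, h2] using hf.const_smul c }
  toFun :=
    { toFun := fun f => (⟨L ⇑(f : L2 V), f.2⟩ : L2 V)
      map_add' := by
        intro f g
        apply Subtype.ext
        have h2 : L ⇑((f : L2 V) + (g : L2 V)) = L ⇑(f : L2 V) + L ⇑(g : L2 V) := by
          rw [lp.coeFn_add, map_add]
        simp only [Submodule.coe_add]
        rw [h2]
        rfl
      map_smul' := by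
        intro c f
        apply Subtype.ext
        have h2 : L ⇑(c • (f : L2 V)) = c • L ⇑(f : L2 V) := by
          rw [lp.coeFn_smul, _root_.map_smul]
        simp only [Submodule.coe_smul]
        rw [h2]
        rfl }

end Shift
/-! ### Directed trees -/

/-- A directed tree: a directed graph which is connected (as an undirected graph), has no
circuits, and in which every vertex has at most one parent. -/
structure DirTree (V : Type*) where
  edge : V → V → Prop
  connected : ∀ u v : V, Relation.ReflTransGen (fun a b => edge a b ∨ edge b a) u v
  noCircuit : ∀ v : V, ¬ Relation.TransGen edge v v
  uniqueParent : ∀ ⦃u₁ u₂ v : V⦄, edge u₁ v → edge u₂ v → u₁ = u₂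

namespace DirTree

variable {V : Type*} (T : DirTree V)

/-- `v ∈ V°`, i.e. `v` is not a root. -/
def HasParent (v : V) : Prop := ∃ u, T.edge u v

/-- The parent of `v`, as an `Option`-valued function. -/
noncomputable def parOpt (v : V) : Option V :=
  if h : T.HasParent v then some h.choose else none

/-- The parent of `v` (junk value `v` itself if `v` is a root). -/
noncomputable def par (v : V) : V := (T.parOpt v).getD v

/-- The set of children of `u`. -/
def Chi (u : V) : Set V := {v | T.edge u v}

/-- The set of descendants of `u`. -/
def Des (u : V) : Set V := {w | ∃ n : ℕ, T.par^[n] w = u}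

/-- The formal action `Λ_T` of the weighted shift on `T` with weights `w`. -/
noncomputable def lamT (w : V → ℂ) : (V → ℂ) →ₗ[ℂ] (V → ℂ) := lamOf T.parOpt w

/-- The weighted shift `S_λ` on the directed tree `T`, as an unbounded operator in `ℓ²(V)`. -/
noncomputable def shift (w : V → ℂ) : L2 V →ₗ.[ℂ] L2 V := pmOf (T.lamT w)

/-- `u` is a Stieltjes vertex with respect to the weighted shift on `T` with weights `w`. -/
noncomputable def StieltjesVertex (w : V → ℂ) (u : V) : Prop :=
  eMemDomInf (T.lamT w) u ∧ IsStieltjesMomentSeq (momSeqL (T.lamT w) u)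

/-- The parent function of the subtree induced on a subset `A ⊆ V` : the parent of `v ∈ A`
inside `A`, if it exists. -/
noncomputable def parOptSub (A : Set V) (v : A) : Option A :=
  match T.parOpt v.1 with
  | none => none
  | some u => if h : u ∈ A then some ⟨u, h⟩ else none

/-- The restriction `S_λ|_{ℓ²(A)}` of a weighted shift to the (invariant) subspace `ℓ²(A)`,
regarded as an operator in the Hilbert space `ℓ²(A)`. -/
noncomputable def shiftRes (w : V → ℂ) (A : Set V) : L2 A →ₗ.[ℂ] L2 A :=
  pmOf (lamOf (T.parOptSub A) fun v => w v.1)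

end DirTree

/-! ### Classical weighted shifts -/

/-- parent function for the directed tree `(ℤ₊, {(n, n+1)})` of the unilateral shift -/
def uniPar : ℕ → Option ℕ
  | 0 => none
  | n + 1 => some n

/-- the formal action of the unilateral weighted shift: `(Λ f)(n+1) = λ_{n+1} f(n)`. -/
def uniLam (lam : ℕ → ℂ) : (ℕ → ℂ) →ₗ[ℂ] (ℕ → ℂ) := lamOf uniPar lam

/-- parent function for the directed tree `(ℤ, {(n, n+1)})` of the bilateral shift -/
def bilPar : ℤ → Option ℤ := fun n => some (n - 1)

/-- the formal action of the bilateral weighted shift: `(Λ f)(n) = λ_n f(n-1)`. -/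
def bilLam (lam : ℤ → ℂ) : (ℤ → ℂ) →ₗ[ℂ] (ℤ → ℂ) := lamOf bilPar lam

/-- `t` is a two-sided Stieltjes moment sequence: there is a positive Borel measure on `(0,∞)`
with `∫ sⁿ dμ = t n` for all `n ∈ ℤ`. -/
def IsTwoSidedStieltjesMomentSeq (t : ℤ → ℝ) : Prop :=
  (∀ n, 0 ≤ t n) ∧ ∃ μ : Measure ℝ,
    μ (Set.Iic 0) = 0 ∧ ∀ n : ℤ, ∫⁻ s, ENNReal.ofReal s ^ n ∂μ = ENNReal.ofReal (t n)

/-! ### The directed trees `𝒯_{η,κ}` -/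

/-- `J_ι = {k ∈ ℕ : 1 ≤ k ≤ ι}`, as a type. -/
abbrev Jt (ι : ℕ∞) := {k : ℕ // 1 ≤ k ∧ (k : ℕ∞) ≤ ι}

/-- The vertex set `V_{η,κ}` of the directed tree `𝒯_{η,κ}` :
`Sum.inl ⟨m, _⟩` is the vertex `-m` (for `m ∈ ℕ`, `m ≤ κ`) and `Sum.inr (i, j)` is the vertex
`(i, j)` (for `i ∈ J_η`, `j ≥ 1`). -/
abbrev VT (η κ : ℕ∞) := {m : ℕ // (m : ℕ∞) ≤ κ} ⊕ (Jt η × {j : ℕ // 1 ≤ j})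

/-- The parent function of the tree `𝒯_{η,κ}` : the parent of `-m` is `-(m+1)` (if `m+1 ≤ κ`;
the vertex `-κ` is the root), the parent of `(i,1)` is `0`, and the parent of `(i,j+1)`
is `(i,j)`. -/
def parEK (η κ : ℕ∞) : VT η κ → Option (VT η κ)
  | .inl ⟨m, _⟩ =>
      if h : ((m + 1 : ℕ) : ℕ∞) ≤ κ then some (.inl ⟨m + 1, h⟩) else none
  | .inr (i, ⟨j, _⟩) =>
      if h : 2 ≤ j then some (.inr (i, ⟨j - 1, by omega⟩))
      else some (.inl ⟨0, zero_le⟩)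

/-- The weight attached to a vertex of `𝒯_{η,κ}` : `lamC m` is the weight `λ_{-m}` and
`lamB i j` is the weight `λ_{i,j}`. -/
def wtEK {η κ : ℕ∞} (lamC : ℕ → ℂ) (lamB : Jt η → ℕ → ℂ) : VT η κ → ℂ
  | .inl ⟨m, _⟩ => lamC m
  | .inr (i, ⟨j, _⟩) => lamB i j

/-- The formal action of the weighted shift on `𝒯_{η,κ}` with weights `λ_{-m} = lamC m`,
`λ_{i,j} = lamB i j`. -/
def ekLam (η κ : ℕ∞) (lamC : ℕ → ℂ) (lamB : Jt η → ℕ → ℂ) :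
    (VT η κ → ℂ) →ₗ[ℂ] (VT η κ → ℂ) := lamOf (parEK η κ) (wtEK lamC lamB)

/-- The weighted shift `S_λ` on `𝒯_{η,κ}`, as an unbounded operator in `ℓ²(V_{η,κ})`. -/
def ekShift (η κ : ℕ∞) (lamC : ℕ → ℂ) (lamB : Jt η → ℕ → ℂ) :
    L2 (VT η κ) →ₗ.[ℂ] L2 (VT η κ) := pmOf (ekLam η κ lamC lamB)

/-- The branching vertex `0` of `𝒯_{η,κ}`. -/
def v0 (η κ : ℕ∞) : VT η κ := Sum.inl ⟨0, zero_le⟩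

/-- The vertex `-m` of `𝒯_{η,κ}`. -/
def vC (η : ℕ∞) {κ : ℕ∞} (m : ℕ) (hm : (m : ℕ∞) ≤ κ) : VT η κ := Sum.inl ⟨m, hm⟩

/-- The vertex `(i, j)` of `𝒯_{η,κ}`. -/
def vB {η : ℕ∞} (κ : ℕ∞) (i : Jt η) (j : ℕ) (hj : 1 ≤ j) : VT η κ := Sum.inr (i, ⟨j, hj⟩)

/-- The nonzero-weights condition for `𝒯_{η,κ}` : all weights attached to non-root vertices
are nonzero. -/
def ekNonzero (η κ : ℕ∞) (lamC : ℕ → ℂ) (lamB : Jt η → ℕ → ℂ) : Prop :=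
  (∀ m : ℕ, ((m + 1 : ℕ) : ℕ∞) ≤ κ → lamC m ≠ 0) ∧ ∀ (i : Jt η) (j : ℕ), 1 ≤ j → lamB i j ≠ 0

/-- `∫_0^∞ s^{-m} dμ(s)` (with values in `[0,∞]`, and the convention `0⁻¹ = ∞`). -/
def invMom (μ : Measure ℝ) (m : ℕ) : ℝ≥0∞ := ∫⁻ s, (ENNReal.ofReal s ^ m)⁻¹ ∂μ

/-- `∫_σ s^{-m} dμ(s)`. -/
def invMomOn (μ : Measure ℝ) (m : ℕ) (σ : Set ℝ) : ℝ≥0∞ := ∫⁻ s in σ, (ENNReal.ofReal s ^ m)⁻¹ ∂μ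

/-- `∫_0^∞ sⁿ dμ(s)`. -/
def powMom (μ : Measure ℝ) (n : ℕ) : ℝ≥0∞ := ∫⁻ s, ENNReal.ofReal s ^ n ∂μ

/-- `∫_σ sⁿ dμ(s)`. -/
def powMomOn (μ : Measure ℝ) (n : ℕ) (σ : Set ℝ) : ℝ≥0∞ := ∫⁻ s in σ, ENNReal.ofReal s ^ n ∂μ

/-- `|z|²` as an extended nonnegative real. -/
def nsq (z : ℂ) : ℝ≥0∞ := ENNReal.ofReal (‖z‖ ^ 2)

/-- `∑_{i ∈ J_η} |λ_{i,1}|² ∫_0^∞ s^{-m} dμ_i(s)`. -/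
def branchSum (η : ℕ∞) (lamB : Jt η → ℕ → ℂ) (μ : Jt η → Measure ℝ) (m : ℕ) : ℝ≥0∞ :=
  ∑' i : Jt η, nsq (lamB i 1) * invMom (μ i) m

/-- `∑_{i ∈ J_η} |λ_{i,1}|² ∫_σ s^{-m} dμ_i(s)`. -/
def branchSumOn (η : ℕ∞) (lamB : Jt η → ℕ → ℂ) (μ : Jt η → Measure ℝ) (m : ℕ) (σ : Set ℝ) :
    ℝ≥0∞ :=
  ∑' i : Jt η, nsq (lamB i 1) * invMomOn (μ i) m σ

/-- `{μ_i}_{i ∈ J_η}` is a system of Borel probability measures on `[0,∞)` satisfying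
`∫_0^∞ sⁿ dμ_i(s) = |λ_{i,2} ⋯ λ_{i,n+1}|²` for all `n ≥ 1` (condition (3.1) of the theorem). -/
def ekMomCond (η : ℕ∞) (lamB : Jt η → ℕ → ℂ) (μ : Jt η → Measure ℝ) : Prop :=
  (∀ i, IsProbOnRplus (μ i)) ∧
    ∀ (i : Jt η) (n : ℕ), 1 ≤ n →
      powMom (μ i) n = ENNReal.ofReal (‖∏ j ∈ Finset.Icc 2 (n + 1), lamB i j‖ ^ 2)

/-- `|λ_0 λ_{-1} ⋯ λ_{-(l-1)}|²` as an extended nonnegative real. -/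
def chainProdSq (lamC : ℕ → ℂ) (l : ℕ) : ℝ≥0∞ := nsq (∏ j ∈ Finset.range l, lamC j)

/-- The sequence `n ↦ ∑_{i ∈ J_η} |λ_{i,1} ⋯ λ_{i,n+1}|²` (which equals `‖S_λ^{n+1} e_0‖²`). -/
def ekBaseSeq (η : ℕ∞) (lamB : Jt η → ℕ → ℂ) (n : ℕ) : ℝ :=
  ∑' i : Jt η, ‖∏ j ∈ Finset.Icc 1 (n + 1), lamB i j‖ ^ 2

/-- The set of children of a vertex of `𝒯_{η,κ}`. -/
def ekChi (η κ : ℕ∞) (u : VT η κ) : Set (VT η κ) := {v | parEK η κ v = some u}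

/-! The density `s` sends a representing measure of `t` to one of the shifted sequence
`n ↦ t (n + 1)`, and it forgets only the mass of the atom at `0`, which the total mass `t 0`
recovers. Hence `t` is determinate as soon as its shift is. At a vertex `u` whose only child
is `w` we have `S e_u = λ_w e_w`, so the shift of `‖Sⁿ e_u‖²` is `|λ_w|² ‖Sⁿ e_w‖²`,
determinate together with `‖Sⁿ e_w‖²`. -/

namespace IsRepMeasure

variable {μ : Measure ℝ} {t : ℕ → ℝ}

lemma smul {c : ℝ} (hc : 0 ≤ c) (h : IsRepMeasure μ t) :
    IsRepMeasure (ENNReal.ofReal c • μ) (fun n => c * t n) := by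
  refine ⟨by simp [h.1], fun n => ?_⟩
  rw [lintegral_smul_measure, h.2 n, ENNReal.ofReal_mul hc, smul_eq_mul]

lemma withDensity_ofReal (h : IsRepMeasure μ t) :
    IsRepMeasure (μ.withDensity fun s => ENNReal.ofReal s) (fun n => t (n + 1)) := by
  have hm : Measurable fun s : ℝ => ENNReal.ofReal s := ENNReal.measurable_ofReal
  refine ⟨?_, fun n => ?_⟩
  · rw [withDensity_apply _ measurableSet_Iio, Measure.restrict_eq_zero.2 h.1,
      lintegral_zero_measure]
  · rw [lintegral_withDensity_eq_lintegral_mul _ hm (hm.pow_const n), ← h.2 (n + 1)]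
    exact lintegral_congr fun s => by simp [pow_succ, mul_comm]

lemma measure_univ_eq (h : IsRepMeasure μ t) : μ univ = ENNReal.ofReal (t 0) := by
  simpa using h.2 0

lemma eq_dirac_add_restrict_Ioi (h : IsRepMeasure μ t) :
    μ = μ {0} • Measure.dirac 0 + μ.restrict (Ioi 0) := by
  have hIci : μ.restrict (Ici 0) = μ := by
    refine Measure.restrict_eq_self_of_ae_mem ?_
    rw [ae_iff]
    simpa [← Iio_def] using h.1
  rw [← Measure.restrict_singleton, ← Measure.restrict_union (by simp) measurableSet_Ioi,
    ← insert_eq, Ioi_insert, hIci]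

end IsRepMeasure

lemma Measure.restrict_Ioi_eq_withDensity_ofReal_withDensity_inv (μ : Measure ℝ) :
    μ.restrict (Ioi 0) =
      (μ.withDensity fun s => ENNReal.ofReal s).withDensity fun s => (ENNReal.ofReal s)⁻¹ := by
  have hm : Measurable fun s : ℝ => ENNReal.ofReal s := ENNReal.measurable_ofReal
  rw [← withDensity_mul μ hm (g := fun s => (ENNReal.ofReal s)⁻¹) hm.inv,
    ← withDensity_indicator_one measurableSet_Ioi]
  congr 1
  funext s
  by_cases hs : 0 < s
  · simp [hs, ENNReal.mul_inv_cancel (ENNReal.ofReal_pos.2 hs).ne' ENNReal.ofReal_ne_top]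
  · simp [hs, ENNReal.ofReal_eq_zero.2 (not_lt.1 hs)]

lemma IsRepMeasure.eq_of_withDensity_ofReal_eq {μ ν : Measure ℝ} {t : ℕ → ℝ}
    (hμ : IsRepMeasure μ t) (hν : IsRepMeasure ν t)
    (h : μ.withDensity (fun s => ENNReal.ofReal s) = ν.withDensity fun s => ENNReal.ofReal s) :
    μ = ν := by
  have hpos : μ.restrict (Ioi 0) = ν.restrict (Ioi 0) := by
    rw [Measure.restrict_Ioi_eq_withDensity_ofReal_withDensity_inv,
      Measure.restrict_Ioi_eq_withDensity_ofReal_withDensity_inv, h]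
  have hfin : ν.restrict (Ioi 0) univ ≠ ∞ :=
    ne_top_of_le_ne_top (hν.measure_univ_eq ▸ ENNReal.ofReal_ne_top)
      (Measure.restrict_apply_le _ _)
  have hatom : μ {0} = ν {0} := by
    have hmass := hμ.measure_univ_eq.trans hν.measure_univ_eq.symm
    rw [hμ.eq_dirac_add_restrict_Ioi, hν.eq_dirac_add_restrict_Ioi] at hmass
    simpa using (ENNReal.add_left_inj hfin).1 (by simpa [hpos] using hmass)
  rw [hμ.eq_dirac_add_restrict_Ioi, hν.eq_dirac_add_restrict_Ioi, hatom, hpos]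

namespace IsDeterminateStieltjes

variable {t : ℕ → ℝ}

lemma const_mul {c : ℝ} (hc : 0 < c) (h : IsDeterminateStieltjes t) :
    IsDeterminateStieltjes (fun n => c * t n) := by
  obtain ⟨hnonneg, ν, hν, huniq⟩ := h
  refine ⟨fun n => mul_nonneg hc.le (hnonneg n), ENNReal.ofReal c • ν, hν.smul hc.le,
    fun μ hμ => ?_⟩
  have hμ' : IsRepMeasure (ENNReal.ofReal c⁻¹ • μ) t := by
    simpa [inv_mul_cancel_left₀ hc.ne'] using hμ.smul (inv_nonneg.2 hc.le)
  calc μ = (ENNReal.ofReal c * ENNReal.ofReal c⁻¹) • μ := by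
        rw [← ENNReal.ofReal_mul hc.le, mul_inv_cancel₀ hc.ne', ENNReal.ofReal_one, one_smul]
    _ = ENNReal.ofReal c • ν := by rw [← smul_smul, huniq _ hμ']

lemma of_shift (ht : IsStieltjesMomentSeq t)
    (hshift : IsDeterminateStieltjes fun n => t (n + 1)) : IsDeterminateStieltjes t := by
  obtain ⟨hnonneg, μ, hμ⟩ := ht
  refine ⟨hnonneg, μ, hμ, fun ν hν => hν.eq_of_withDensity_ofReal_eq hμ ?_⟩
  exact hshift.2.unique hν.withDensity_ofReal hμ.withDensity_ofReal

end IsDeterminateStieltjes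

lemma momSeqL_succ_of_apply_eV {V : Type*} {L : (V → ℂ) →ₗ[ℂ] (V → ℂ)} {u w : V} {c : ℂ}
    (h : L (eV u) = c • eV w) (n : ℕ) :
    momSeqL L u (n + 1) = ‖c‖ ^ 2 * momSeqL L w n := by
  have hiter : (⇑L)^[n] (c • eV w) = c • (⇑L)^[n] (eV w) := by
    rw [← Module.End.pow_apply, ← Module.End.pow_apply, map_smul]
  rw [momSeqL, Function.iterate_succ_apply, h, hiter, momSeqL, ← tsum_mul_left]
  simp [mul_pow]

namespace DirTree

variable {V : Type*} (T : DirTree V)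

lemma parOpt_eq_some_iff {u v : V} : T.parOpt v = some u ↔ T.edge u v := by
  unfold parOpt
  split_ifs with hv
  · exact ⟨fun h => Option.some.inj h ▸ hv.choose_spec,
      fun h => congrArg some (T.uniqueParent hv.choose_spec h)⟩
  · exact ⟨nofun, fun h => absurd ⟨u, h⟩ hv⟩

lemma lamT_apply_eV (lam : V → ℂ) (u : V) : T.lamT lam (eV u) = (T.Chi u).indicator lam := by
  funext v
  change ((T.parOpt v).map fun p => lam v * eV u p).getD 0 = _
  by_cases huv : T.edge u v
  · rw [(T.parOpt_eq_some_iff).2 huv]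
    simp [eV, indicator_of_mem (show v ∈ T.Chi u from huv)]
  · rw [indicator_of_notMem (show v ∉ T.Chi u from huv)]
    rcases hp : T.parOpt v with _ | p
    · rfl
    · have hpu : p ≠ u := by rintro rfl; exact huv ((T.parOpt_eq_some_iff).1 hp)
      simp [eV, hpu]

lemma lamT_apply_eV_of_chi_eq_singleton {lam : V → ℂ} {u w : V} (hchi : T.Chi u = {w}) :
    T.lamT lam (eV u) = lam w • eV w := by
  rw [T.lamT_apply_eV, hchi]
  funext v
  by_cases hv : v = w <;> simp [eV, hv]

end DirTree

/-- Lemma 2(ii). -/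
theorem weightedShift_singleChild_determinate
    {V : Type} (T : DirTree V) (lam : V → ℂ) (u w : V)
    (hchi : T.Chi u = {w}) (hw : lam w ≠ 0)
    (hu : T.StieltjesVertex lam u)
    (hdet : IsDeterminateStieltjes (momSeqL (T.lamT lam) w)) :
    IsDeterminateStieltjes (momSeqL (T.lamT lam) u) ∧
      IsDeterminateStieltjes (fun n => momSeqL (T.lamT lam) u (n + 1)) := by
  have hsucc : (fun n => momSeqL (T.lamT lam) u (n + 1))
      = fun n => ‖lam w‖ ^ 2 * momSeqL (T.lamT lam) w n :=
    funext (momSeqL_succ_of_apply_eV (T.lamT_apply_eV_of_chi_eq_singleton hchi))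
  have hshift : IsDeterminateStieltjes fun n => momSeqL (T.lamT lam) u (n + 1) :=
    hsucc ▸ hdet.const_mul (by positivity)
  exact ⟨IsDeterminateStieltjes.of_shift hu.2 hshift, hshift⟩
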